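/- The truncated series identity: for every m ≥ 1 and n ≤ 2^m − 1 (equivalently, for n with Ω-bounded divisor chains), κ_x(n) = Σ_{j=1}^{m} (1^{*(j-1)} * id_x)(n) / 2^j + (1^{*m} * κ_x)(n) / 2^m, where 1^{*j} denotes the j-fold Dirichlet convolution of the constant function 1 with itself (1^{*0} = ε). -/

import Mathlib

open Finset

/-- Recursive divisor function: κ_x(n) = n^x + Σ_{d|n, d<n} κ_x(d). -/
noncomputable def kappa (x : ℂ) (n : ℕ) : ℂ :=
  (n : ℂ) ^ x + ∑ d ∈ n.properDivisors.attach, kappa x d.1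
termination_by n
decreasing_by exact (Nat.mem_properDivisors.mp d.2).2

/-- Number of ordered factorizations: K(n) = ε(n) + Σ_{d|n, d<n} K(d). -/
def Kfac (n : ℕ) : ℕ :=
  (if n = 1 then 1 else 0) + ∑ d ∈ n.properDivisors.attach, Kfac d.1
termination_by n
decreasing_by exact (Nat.mem_properDivisors.mp d.2).2

/-- Divisor power sum σ_x(n) = Σ_{d|n} d^x. -/
noncomputable def sigmaC (x : ℂ) (n : ℕ) : ℂ := ∑ d ∈ n.divisors, (d : ℂ) ^ x

/-- Jordan's totient J_x = μ * id_x. -/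
noncomputable def jordan (x : ℂ) (n : ℕ) : ℂ :=
  ∑ d ∈ n.divisors, (ArithmeticFunction.moebius d : ℂ) * ((n / d : ℕ) : ℂ) ^ x

/-- j-fold Dirichlet convolution power of the constant function 1 (onePow 0 = ε). -/
noncomputable def onePow : ℕ → ℕ → ℂ
  | 0, n => if n = 1 then 1 else 0
  | (j + 1), n => ∑ d ∈ n.divisors, onePow j d

/-!
Splitting off the term `d = n` in the recursion gives `2 κ_x = id_x + 1 * κ_x` on `n ≥ 1`, i.e.
`κ_x = ½ (id_x + 1 * κ_x)` in the ring of arithmetic functions. Unrolling this affine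
fixed-point equation `m` times produces the geometric-type partial sum
`Σ_{j<m} 2^{-(j+1)} 1^{*j} * id_x` plus the remainder `2^{-m} 1^{*m} * κ_x`; evaluating at `n`
gives the identity.
-/

section FixedPoint

variable {R A : Type*} [CommSemiring R] [Semiring A] [Algebra R A]

theorem eq_sum_smul_pow_mul_add_of_eq_smul {c : R} {p z k : A} (h : k = c • (p + z * k))
    (m : ℕ) :
    k = ∑ j ∈ range m, c ^ (j + 1) • (z ^ j * p) + c ^ m • (z ^ m * k) := by
  induction m with
  | zero => simp
  | succ m ih =>
    calc k = ∑ j ∈ range m, c ^ (j + 1) • (z ^ j * p) + c ^ m • (z ^ m * k) := ih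
      _ = ∑ j ∈ range m, c ^ (j + 1) • (z ^ j * p) + c ^ m • (z ^ m * (c • (p + z * k))) := by
        rw [← h]
      _ = _ := by
        rw [sum_range_succ, mul_smul_comm, mul_add, smul_add, smul_add, smul_smul, smul_smul,
          ← mul_assoc, ← pow_succ, ← pow_succ, add_assoc]

end FixedPoint

namespace ArithmeticFunction

theorem sum_apply {ι R : Type*} [AddCommMonoid R] (s : Finset ι) (f : ι → ArithmeticFunction R)
    (n : ℕ) : (∑ i ∈ s, f i) n = ∑ i ∈ s, f i n :=
  map_sum (⟨⟨fun g => g n, rfl⟩, fun _ _ => rfl⟩ : ArithmeticFunction R →+ R) f s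

theorem mul_apply_eq_sum_divisors {R : Type*} [Semiring R] (f g : ArithmeticFunction R) (n : ℕ) :
    (f * g) n = ∑ d ∈ n.divisors, f d * g (n / d) := by
  rw [mul_apply, ← Nat.sum_divisorsAntidiagonal (fun a b => f a * g b)]

end ArithmeticFunction

open ArithmeticFunction
open scoped ArithmeticFunction.zeta

theorem kappa_eq_cpow_add_sum_properDivisors (x : ℂ) (n : ℕ) :
    kappa x n = (n : ℂ) ^ x + ∑ d ∈ n.properDivisors, kappa x d := by
  rw [kappa, sum_attach n.properDivisors (kappa x)]

theorem two_mul_kappa {n : ℕ} (hn : n ≠ 0) (x : ℂ) :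
    2 * kappa x n = (n : ℂ) ^ x + ∑ d ∈ n.divisors, kappa x d := by
  rw [← Nat.insert_self_properDivisors hn, sum_insert Nat.self_notMem_properDivisors,
    kappa_eq_cpow_add_sum_properDivisors x n]
  ring

theorem onePow_eq_zeta_pow_apply (j n : ℕ) : onePow j n = ((ζ : ArithmeticFunction ℂ) ^ j) n := by
  induction j generalizing n with
  | zero => simp [onePow, one_apply]
  | succ j ih =>
    rw [onePow, pow_succ', coe_zeta_mul_apply]
    exact sum_congr rfl fun d _ => ih d

/-- `κ_x` as an element of the ring of arithmetic functions, which forces the value `0` at `0`. -/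
noncomputable def kappaFun (x : ℂ) : ArithmeticFunction ℂ :=
  ⟨fun n => if n = 0 then 0 else kappa x n, rfl⟩

/-- `id_x` as an arithmetic function. -/
noncomputable def cpowFun (x : ℂ) : ArithmeticFunction ℂ :=
  ⟨fun n => if n = 0 then 0 else (n : ℂ) ^ x, rfl⟩

theorem kappaFun_apply (x : ℂ) {n : ℕ} (hn : n ≠ 0) : kappaFun x n = kappa x n := if_neg hn

theorem cpowFun_apply (x : ℂ) {n : ℕ} (hn : n ≠ 0) : cpowFun x n = (n : ℂ) ^ x := if_neg hn

theorem kappaFun_eq_half_smul (x : ℂ) :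
    kappaFun x = (2⁻¹ : ℂ) • (cpowFun x + ζ * kappaFun x) := by
  ext n
  rcases eq_or_ne n 0 with rfl | hn
  · simp
  have hsum : ∑ d ∈ n.divisors, kappaFun x d = ∑ d ∈ n.divisors, kappa x d :=
    sum_congr rfl fun d hd => kappaFun_apply x (Nat.pos_of_mem_divisors hd).ne'
  rw [smul_map, ArithmeticFunction.add_apply, coe_zeta_mul_apply, hsum, cpowFun_apply x hn,
    ← two_mul_kappa hn, kappaFun_apply x hn, smul_eq_mul, inv_mul_cancel_left₀ two_ne_zero]

theorem zeta_pow_mul_apply_eq_sum_onePow {f : ArithmeticFunction ℂ} {g : ℕ → ℂ}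
    (hfg : ∀ n ≠ 0, f n = g n) (j : ℕ) {n : ℕ} (hn : n ≠ 0) :
    ((ζ : ArithmeticFunction ℂ) ^ j * f) n = ∑ d ∈ n.divisors, onePow j d * g (n / d) := by
  rw [mul_apply_eq_sum_divisors]
  refine sum_congr rfl fun d hd => ?_
  have hd0 : d ≠ 0 := (Nat.pos_of_mem_divisors hd).ne'
  rw [onePow_eq_zeta_pow_apply,
    hfg (n / d) ((Nat.div_ne_zero_iff_of_dvd (Nat.dvd_of_mem_divisors hd)).2 ⟨hn, hd0⟩)]

theorem stmt18_general (x : ℂ) (m : ℕ) (n : ℕ) (hn : 1 ≤ n) :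
    kappa x n =
      (∑ j ∈ Finset.range m,
        (∑ d ∈ n.divisors, onePow j d * ((n / d : ℕ) : ℂ) ^ x) / 2 ^ (j + 1)) +
      (∑ d ∈ n.divisors, onePow m d * kappa x (n / d)) / 2 ^ m := by
  have hn0 : n ≠ 0 := Nat.one_le_iff_ne_zero.mp hn
  have h := congrArg (· n) (eq_sum_smul_pow_mul_add_of_eq_smul (kappaFun_eq_half_smul x) m)
  simp only [ArithmeticFunction.add_apply, ArithmeticFunction.sum_apply, smul_map, smul_eq_mul,
    kappaFun_apply x hn0,
    zeta_pow_mul_apply_eq_sum_onePow (fun _ => cpowFun_apply x) _ hn0,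
    zeta_pow_mul_apply_eq_sum_onePow (fun _ => kappaFun_apply x) _ hn0] at h
  simpa only [inv_pow, ← div_eq_inv_mul] using h

theorem stmt18 (x : ℂ) (m : ℕ) (hm : 1 ≤ m) (n : ℕ) (hn : 1 ≤ n)
    (hnm : n ≤ 2 ^ m - 1) :
    kappa x n =
      (∑ j ∈ Finset.range m,
        (∑ d ∈ n.divisors, onePow j d * ((n / d : ℕ) : ℂ) ^ x) / 2 ^ (j + 1)) +
      (∑ d ∈ n.divisors, onePow m d * kappa x (n / d)) / 2 ^ m :=
  stmt18_general x m n hn
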